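/- The function Q* is continuous, concave, and nondecreasing on [0,1], and Q(x) ≥ Q*(x) for all x ∈ (0, ℓ]. If moreover Constraints I and II hold, then Q(x) ≥ Q*(x) for all x ∈ (0, 1]. -/

import Mathlib

/-- The degree-`d` Chebyshev polynomial of the first kind, as a real function. -/
noncomputable def cheb : ℕ → ℝ → ℝ
  | 0, _ => 1
  | 1, x => x
  | (n+2), x => 2 * x * cheb (n+1) x - cheb n x

/-- `ψ(x) = (r+ℓ−2x)/(r−ℓ)`. -/
noncomputable def psiMap (ℓ r x : ℝ) : ℝ := (r + ℓ - 2 * x) / (r - ℓ)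

/-- `δ = 1 / T_d(1 + 2α/(1−α))` where `α = ℓ/r`. -/
noncomputable def cDelta (ℓ r : ℝ) (d : ℕ) : ℝ :=
  1 / cheb d (1 + 2 * (ℓ / r) / (1 - ℓ / r))

/-- `P_d(x) = −δ·T_d(ψ(x))`. -/
noncomputable def Pd (ℓ r : ℝ) (d : ℕ) (x : ℝ) : ℝ := - cDelta ℓ r d * cheb d (psiMap ℓ r x)

/-- `Q(x) = 1 + e^{−mx}·P_d(x)`. -/
noncomputable def Qfun (ℓ r : ℝ) (d : ℕ) (m x : ℝ) : ℝ :=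
  1 + Real.exp (-(m * x)) * Pd ℓ r d x

/-- `Q*(x) = 1 + P_d(x)` for `x < ℓ` and `1 − δ` for `x ≥ ℓ`. -/
noncomputable def Qstar (ℓ r : ℝ) (d : ℕ) (x : ℝ) : ℝ :=
  if x < ℓ then 1 + Pd ℓ r d x else 1 - cDelta ℓ r d

/-- Constraint I: `r ≥ 3ℓ` and `d ≥ 4·√((r−ℓ)/(2ℓ))·ln(20/ε)`. -/
def ConstraintI (ℓ r : ℝ) (d : ℕ) (ε : ℝ) : Prop :=
  r ≥ 3 * ℓ ∧ (d : ℝ) ≥ 4 * Real.sqrt ((r - ℓ) / (2 * ℓ)) * Real.log (20 / ε)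

/-- Constraint II: `m ≥ 5.5·d/(r−ℓ)`. -/
def ConstraintII (ℓ r : ℝ) (d : ℕ) (m : ℝ) : Prop :=
  m ≥ 5.5 * d / (r - ℓ)

/-- Constraint III: `m ≤ ε²n²/256` and
`d⁶·9^d·((r+ℓ)/(r−ℓ))^{2d−2} ≤ (1/4)·m·(r−ℓ)²·n²`. -/
def ConstraintIII (ℓ r : ℝ) (d : ℕ) (m ε : ℝ) (n : ℕ) : Prop :=
  m ≤ ε ^ 2 * (n : ℝ) ^ 2 / 256 ∧
  (d : ℝ) ^ 6 * 9 ^ d * ((r + ℓ) / (r - ℓ)) ^ (2 * d - 2) ≤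
    (1 / 4) * m * (r - ℓ) ^ 2 * (n : ℝ) ^ 2

/-- Constraint IV: `ℓ ≤ ε/(20n)`. -/
def ConstraintIV (ℓ ε : ℝ) (n : ℕ) : Prop := ℓ ≤ ε / (20 * n)

/-- Constraint IVb: `ℓ ≤ (1/3)·(ε/n)·log₂(1/ε)`. -/
def ConstraintIVb (ℓ ε : ℝ) (n : ℕ) : Prop :=
  ℓ ≤ (1 / 3) * (ε / n) * Real.logb 2 (1 / ε)

/-- A probability distribution over `ℕ`: a nonnegative sequence summing to `1`. -/
def IsDist (p : ℕ → ℝ) : Prop := (∀ i, 0 ≤ p i) ∧ ∑' i, p i = 1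

/-- Total variation distance `(1/2)·Σᵢ|p_i − q_i|`. -/
noncomputable def dTV (p q : ℕ → ℝ) : ℝ := (1 / 2) * ∑' i, |p i - q i|

/-- `p` is `ε`-far from having support size at most `n`. -/
def FarFromSuppSize (ε : ℝ) (n : ℕ) (p : ℕ → ℝ) : Prop :=
  ∀ q : ℕ → ℝ, IsDist q → {i | q i ≠ 0}.encard ≤ n → dTV p q > ε

/-- `Φ(λ) = (1 + ε/(λ·ℓ·n))·Q*(λ·ℓ)`. -/
noncomputable def Phi (ℓ r : ℝ) (d : ℕ) (ε : ℝ) (n : ℕ) (lam : ℝ) : ℝ :=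
  (1 + ε / (lam * ℓ * n)) * Qstar ℓ r d (lam * ℓ)

open Set

set_option maxHeartbeats 1000000

lemma cheb_two (n : ℕ) (x : ℝ) : cheb (n+2) x = 2 * x * cheb (n+1) x - cheb n x := rfl

lemma cheb_cont (n : ℕ) : Continuous (cheb n) := by
  induction n using Nat.twoStepInduction with
  | zero => exact continuous_const
  | one => exact continuous_id
  | more n ih1 ih2 =>
    have h : cheb (n+2) = fun x => 2 * x * cheb (n+1) x - cheb n x := funext fun x => rfl
    rw [h]
    exact ((continuous_const.mul continuous_id).mul ih2).sub ih1

lemma cheb_at_one (n : ℕ) : cheb n 1 = 1 := by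
  induction n using Nat.twoStepInduction with
  | zero => rfl
  | one => rfl
  | more n ih1 ih2 => rw [cheb_two, ih1, ih2]; ring

lemma cheb_cos (n : ℕ) (θ : ℝ) : cheb n (Real.cos θ) = Real.cos (n * θ) := by
  induction n using Nat.twoStepInduction with
  | zero => simp [cheb]
  | one => simp [cheb]
  | more n ih1 ih2 =>
    rw [cheb_two, ih1, ih2]
    push_cast
    rw [show ((n:ℝ)+2)*θ = ((n:ℝ)+1)*θ + θ by ring, Real.cos_add,
      show (n:ℝ)*θ = ((n:ℝ)+1)*θ - θ by ring, Real.cos_sub]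
    ring

lemma cheb_abs_le (n : ℕ) {y : ℝ} (h1 : -1 ≤ y) (h2 : y ≤ 1) : |cheb n y| ≤ 1 := by
  have := cheb_cos n (Real.arccos y)
  rw [Real.cos_arccos h1 h2] at this
  rw [this]
  exact Real.abs_cos_le_one _

lemma cheb_neg (n : ℕ) (x : ℝ) : cheb n (-x) = (-1)^n * cheb n x := by
  induction n using Nat.twoStepInduction with
  | zero => simp [cheb]
  | one => simp [cheb]
  | more n ih1 ih2 => rw [cheb_two, cheb_two, ih1, ih2]; ring

def GoodFn (f : ℝ → ℝ) : Prop :=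
  ConvexOn ℝ (Ici 1) f ∧ MonotoneOn f (Ici 1) ∧ ∀ x ∈ Ici (1:ℝ), 0 ≤ f x

lemma GoodFn.add {f g : ℝ → ℝ} (hf : GoodFn f) (hg : GoodFn g) : GoodFn (fun x => f x + g x) :=
  ⟨hf.1.add hg.1, fun x hx y hy hxy => add_le_add (hf.2.1 hx hy hxy) (hg.2.1 hx hy hxy),
    fun x hx => add_nonneg (hf.2.2 x hx) (hg.2.2 x hx)⟩

lemma goodFn_affine : GoodFn (fun x => 2 * x - 2) := by
  refine ⟨⟨convex_Ici 1, ?_⟩, fun x _ y _ hxy => by dsimp; linarith,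
    fun x hx => by simp only [mem_Ici] at hx; dsimp; linarith⟩
  intro x _ y _ a b _ _ hab
  simp only [smul_eq_mul]
  nlinarith [hab]

lemma GoodFn.mulAffine {f : ℝ → ℝ} (hf : GoodFn f) : GoodFn (fun x => (2 * x - 2) * f x) := by
  have h := (goodFn_affine.1.mul hf.1 (fun x hx => goodFn_affine.2.2 x hx)
    (fun x hx => hf.2.2 x hx) (goodFn_affine.2.1.monovaryOn hf.2.1))
  refine ⟨h, fun x hx y hy hxy => ?_, fun x hx => mul_nonneg (goodFn_affine.2.2 x hx) (hf.2.2 x hx)⟩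
  exact mul_le_mul (goodFn_affine.2.1 hx hy hxy) (hf.2.1 hx hy hxy) (hf.2.2 x hx)
    (goodFn_affine.2.2 y hy)

lemma cheb_good (n : ℕ) :
    GoodFn (cheb n) ∧ GoodFn (fun x => cheb (n+1) x - cheb n x) := by
  induction n with
  | zero =>
    constructor
    · exact ⟨convexOn_const 1 (convex_Ici 1), fun x _ y _ _ => le_rfl, fun x _ => one_pos.le⟩
    · refine ⟨⟨convex_Ici 1, ?_⟩, fun x _ y _ hxy => by simp [cheb]; linarith,
        fun x hx => by simp only [mem_Ici] at hx; simp [cheb]; linarith⟩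
      intro x _ y _ a b _ _ hab
      simp only [smul_eq_mul, cheb]
      nlinarith [hab]
  | succ n ih =>
    obtain ⟨hT, hD⟩ := ih
    have hT1 : GoodFn (cheb (n+1)) := by
      have h : (fun x => cheb n x + (cheb (n+1) x - cheb n x)) = cheb (n+1) := by
        funext x; ring
      rw [← h]; exact hT.add hD
    constructor
    · exact hT1
    · have h : (fun x => cheb (n+2) x - cheb (n+1) x)
          = fun x => (2 * x - 2) * cheb (n+1) x + (cheb (n+1) x - cheb n x) := by
        funext x; rw [cheb_two]; ring
      rw [h]; exact (hT1.mulAffine).add hD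

lemma cheb_ge_one (n : ℕ) {x : ℝ} (hx : 1 ≤ x) : 1 ≤ cheb n x := by
  have := (cheb_good n).1.2.1 (self_mem_Ici) (mem_Ici.mpr hx) hx
  rwa [cheb_at_one] at this

lemma cheb_le_pow (n : ℕ) {x : ℝ} (hx : 1 ≤ x) :
    cheb n x ≤ (2 * x) ^ n ∧ cheb (n+1) x ≤ (2 * x) ^ (n+1) := by
  induction n with
  | zero => constructor <;> simp [cheb] <;> linarith
  | succ n ih =>
    refine ⟨ih.2, ?_⟩
    rw [cheb_two]
    have h0 : (1:ℝ) ≤ cheb n x := cheb_ge_one n hx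
    have h2 : (0:ℝ) ≤ 2 * x := by linarith
    calc 2 * x * cheb (n+1) x - cheb n x ≤ 2 * x * (2*x)^(n+1) := by nlinarith [ih.2]
      _ = (2*x)^(n+2) := by ring

/-- `Q*` is continuous, concave, and nondecreasing on `[0,1]`, and
`Q(x) ≥ Q*(x)` for all `x ∈ (0, ℓ]`; if moreover Constraints I and II hold, then
`Q(x) ≥ Q*(x)` for all `x ∈ (0, 1]`. -/
theorem Qstar_properties (ℓ r : ℝ) (hℓ : 0 < ℓ) (hℓr : ℓ < r) (hr : r ≤ 1)
    (d : ℕ) (hd : 1 ≤ d) (m : ℝ) (hm : 0 ≤ m) (ε : ℝ) (hε0 : 0 < ε) (hε1 : ε < 1) :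
    ContinuousOn (Qstar ℓ r d) (Set.Icc (0 : ℝ) 1) ∧
    ConcaveOn ℝ (Set.Icc (0 : ℝ) 1) (Qstar ℓ r d) ∧
    MonotoneOn (Qstar ℓ r d) (Set.Icc (0 : ℝ) 1) ∧
    (∀ x ∈ Set.Ioc (0 : ℝ) ℓ, Qfun ℓ r d m x ≥ Qstar ℓ r d x) ∧
    (ConstraintI ℓ r d ε → ConstraintII ℓ r d m →
      ∀ x ∈ Set.Ioc (0 : ℝ) 1, Qfun ℓ r d m x ≥ Qstar ℓ r d x) := by
  have hrl : (0:ℝ) < r - ℓ := by linarith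
  have harg : 1 + 2 * (ℓ / r) / (1 - ℓ / r) = (r + ℓ) / (r - ℓ) := by
    have hr0 : r ≠ 0 := (hℓ.trans hℓr).ne'
    have h1 : 1 - ℓ / r = (r - ℓ) / r := by field_simp
    rw [h1]
    field_simp
    ring
  have hδeq : cDelta ℓ r d = 1 / cheb d ((r + ℓ) / (r - ℓ)) := by rw [cDelta, harg]
  have hw1 : (1:ℝ) ≤ (r + ℓ) / (r - ℓ) := by rw [le_div_iff₀ hrl]; linarith
  have hcw : 1 ≤ cheb d ((r + ℓ) / (r - ℓ)) := cheb_ge_one d hw1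
  have hδpos : 0 < cDelta ℓ r d := by
    rw [hδeq]; exact one_div_pos.mpr (lt_of_lt_of_le one_pos hcw)
  have hδle1 : cDelta ℓ r d ≤ 1 := by
    rw [hδeq]
    exact (div_le_one (lt_of_lt_of_le one_pos hcw)).mpr hcw
  set δ := cDelta ℓ r d with hδdef
  have hψℓ : psiMap ℓ r ℓ = 1 := by
    unfold psiMap
    rw [show r + ℓ - 2 * ℓ = r - ℓ by ring, div_self hrl.ne']
  have hψge : ∀ {x : ℝ}, x ≤ ℓ → 1 ≤ psiMap ℓ r x := by
    intro x hx
    unfold psiMap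
    rw [le_div_iff₀ hrl]; linarith
  have hψanti : ∀ {x y : ℝ}, x ≤ y → psiMap ℓ r y ≤ psiMap ℓ r x := by
    intro x y hxy
    unfold psiMap
    rw [div_le_div_iff₀ hrl hrl]
    nlinarith
  have hψaff : ∀ (a b x y : ℝ), a + b = 1 →
      psiMap ℓ r (a * x + b * y) = a * psiMap ℓ r x + b * psiMap ℓ r y := by
    intro a b x y hab
    unfold psiMap
    field_simp
    linear_combination (-(r + ℓ)) * hab
  set g : ℝ → ℝ := fun x => 1 - δ * cheb d (psiMap ℓ r x) with hgdef
  have hgmono : MonotoneOn g (Icc 0 ℓ) := by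
    intro x hx y hy hxy
    have h1 : 1 ≤ psiMap ℓ r y := hψge hy.2
    have h2 : psiMap ℓ r y ≤ psiMap ℓ r x := hψanti hxy
    have h3 := (cheb_good d).1.2.1 (mem_Ici.mpr h1) (mem_Ici.mpr (h1.trans h2)) h2
    have := mul_le_mul_of_nonneg_left h3 hδpos.le
    simp only [hgdef]
    linarith
  have hgconc : ConcaveOn ℝ (Icc 0 ℓ) g := by
    refine ⟨convex_Icc _ _, ?_⟩
    intro x hx y hy a b ha hb hab
    simp only [smul_eq_mul, hgdef]
    have hx1 : 1 ≤ psiMap ℓ r x := hψge hx.2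
    have hy1 : 1 ≤ psiMap ℓ r y := hψge hy.2
    have hcomb := (cheb_good d).1.1.2 (mem_Ici.mpr hx1) (mem_Ici.mpr hy1) ha hb hab
    simp only [smul_eq_mul] at hcomb
    rw [hψaff a b x y hab]
    have := mul_le_mul_of_nonneg_left hcomb hδpos.le
    nlinarith [this, hab]
  have hEq : Set.EqOn (Qstar ℓ r d) (fun x => g (min x ℓ)) (Icc 0 1) := by
    intro x _
    by_cases hxℓ : x < ℓ
    · simp only [Qstar, Pd, if_pos hxℓ, min_eq_left hxℓ.le, hgdef]
      ring
    · simp only [Qstar, if_neg hxℓ, min_eq_right (le_of_not_gt hxℓ), hgdef, hψℓ, cheb_at_one]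
      ring
  have hψcont : Continuous (psiMap ℓ r) := by
    have : Continuous (fun x : ℝ => r + ℓ - 2 * x) := by continuity
    exact this.div_const _
  have hhcont : Continuous (fun x => g (min x ℓ)) := by
    have hg : Continuous g := continuous_const.sub (continuous_const.mul ((cheb_cont d).comp hψcont))
    exact hg.comp (continuous_id.min continuous_const)
  have hQcont : ContinuousOn (Qstar ℓ r d) (Icc 0 1) :=
    hhcont.continuousOn.congr hEq
  have hminmem : ∀ {x : ℝ}, x ∈ Icc (0:ℝ) 1 → min x ℓ ∈ Icc 0 ℓ := by
    intro x hx
    exact ⟨le_min hx.1 hℓ.le, min_le_right _ _⟩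
  have hhconc : ConcaveOn ℝ (Icc 0 1) (fun x => g (min x ℓ)) := by
    refine ⟨convex_Icc _ _, ?_⟩
    intro x hx y hy a b ha hb hab
    simp only [smul_eq_mul]
    have hu := hminmem hx
    have hv := hminmem hy
    have huv : a * min x ℓ + b * min y ℓ ∈ Icc (0:ℝ) ℓ := by
      constructor
      · exact add_nonneg (mul_nonneg ha hu.1) (mul_nonneg hb hv.1)
      · nlinarith [hu.2, hv.2]
    have hm2 : min (a * x + b * y) ℓ ∈ Icc (0:ℝ) ℓ := by
      constructor
      · exact le_min (add_nonneg (mul_nonneg ha hx.1) (mul_nonneg hb hy.1)) hℓ.le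
      · exact min_le_right _ _
    have h1 : a * min x ℓ + b * min y ℓ ≤ min (a * x + b * y) ℓ := by
      apply le_min
      · have := min_le_left x ℓ
        have := min_le_left y ℓ
        nlinarith
      · nlinarith [min_le_right x ℓ, min_le_right y ℓ]
    calc a * g (min x ℓ) + b * g (min y ℓ) ≤ g (a * min x ℓ + b * min y ℓ) := by
          have := hgconc.2 hu hv ha hb hab
          simpa using this
      _ ≤ g (min (a * x + b * y) ℓ) := hgmono huv hm2 h1
  have hQconc : ConcaveOn ℝ (Icc 0 1) (Qstar ℓ r d) := by
    refine ⟨convex_Icc _ _, ?_⟩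
    intro x hx y hy a b ha hb hab
    rw [hEq hx, hEq hy, hEq ((convex_Icc _ _) hx hy ha hb hab)]
    exact hhconc.2 hx hy ha hb hab
  have hQmono : MonotoneOn (Qstar ℓ r d) (Icc 0 1) := by
    intro x hx y hy hxy
    rw [hEq hx, hEq hy]
    exact hgmono (hminmem hx) (hminmem hy) (min_le_min hxy le_rfl)
  have hpart4 : ∀ x ∈ Set.Ioc (0 : ℝ) ℓ, Qfun ℓ r d m x ≥ Qstar ℓ r d x := by
    intro x hx
    obtain ⟨hx0, hxℓ⟩ := hx
    have hc1 : 1 ≤ cheb d (psiMap ℓ r x) := cheb_ge_one d (hψge hxℓ)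
    have hexp : Real.exp (-(m * x)) ≤ 1 := by
      calc Real.exp (-(m * x)) ≤ Real.exp 0 :=
            Real.exp_le_exp.mpr (neg_nonpos.mpr (mul_nonneg hm hx0.le))
        _ = 1 := Real.exp_zero
    have hexppos := Real.exp_pos (-(m * x))
    simp only [Qfun, Qstar, Pd]
    by_cases h : x < ℓ
    · simp only [if_pos h]
      have hcpos : (0:ℝ) ≤ δ * cheb d (psiMap ℓ r x) := mul_nonneg hδpos.le (by linarith)
      have key := mul_le_mul_of_nonneg_left hexp hcpos
      nlinarith [key]
    · simp only [if_neg h]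
      have hxeq : x = ℓ := le_antisymm hxℓ (not_lt.mp h)
      subst hxeq
      rw [hψℓ, cheb_at_one]
      nlinarith [hexp, hexppos, hδpos]
  refine ⟨hQcont, hQconc, hQmono, hpart4, ?_⟩
  intro _ hII x hx
  obtain ⟨hx0, hx1⟩ := hx
  by_cases hxℓ : x ≤ ℓ
  · exact hpart4 x ⟨hx0, hxℓ⟩
  push_neg at hxℓ
  have hnotlt : ¬ x < ℓ := not_lt.mpr hxℓ.le
  set y := psiMap ℓ r x with hydef
  set c := cheb d y with hcdef
  have hylt1 : y < 1 := by
    rw [hydef]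
    unfold psiMap
    rw [div_lt_one hrl]
    linarith
  have hmx0 : 0 ≤ m * x := mul_nonneg hm hx0.le
  have hexp : Real.exp (-(m * x)) ≤ 1 := by
    calc Real.exp (-(m * x)) ≤ Real.exp 0 := Real.exp_le_exp.mpr (by linarith)
      _ = 1 := Real.exp_zero
  have hexppos := Real.exp_pos (-(m * x))
  have hkey : Real.exp (-(m * x)) * c ≤ 1 := by
    by_cases hy : -1 ≤ y
    · have habs := cheb_abs_le d hy hylt1.le
      have h1 : c ≤ 1 := le_of_abs_le habs
      nlinarith
    · push_neg at hy
      have hyge : 1 ≤ -y := by linarith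
      have hpar : cheb d y = (-1:ℝ)^d * cheb d (-y) := by
        have := cheb_neg d (-y)
        rwa [neg_neg] at this
      have hpos : (1:ℝ) ≤ cheb d (-y) := cheb_ge_one d hyge
      have hcle : c ≤ cheb d (-y) := by
        rw [hcdef, hpar]
        rcases Nat.even_or_odd d with he | ho
        · rw [he.neg_one_pow]; linarith
        · rw [ho.neg_one_pow]; linarith
      have hbound : cheb d (-y) ≤ (2 * (-y))^d := (cheb_le_pow d hyge).1
      set t := x / (r - ℓ) with htdef
      have ht : 0 < t := div_pos hx0 hrl
      have h4t : 2 * (-y) ≤ 4 * t := by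
        rw [hydef]
        unfold psiMap
        rw [htdef, show 2 * -((r + ℓ - 2 * x)/(r - ℓ)) = (2*(2*x-(r+ℓ)))/(r-ℓ) by ring,
          show 4*(x/(r-ℓ)) = (4*x)/(r-ℓ) by ring, div_le_div_iff₀ hrl hrl]
        nlinarith [hrl, hℓ, hℓr]
      have hp1 : (2 * (-y))^d ≤ (4 * t)^d := pow_le_pow_left₀ (by linarith) h4t d
      have hexp4t : 4 * t ≤ Real.exp (5.5 * t) := by
        have := Real.add_one_le_exp (5.5 * t)
        linarith
      have hp2 : (4 * t)^d ≤ Real.exp (5.5 * t) ^ d := pow_le_pow_left₀ (by linarith) hexp4t d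
      have hp3 : Real.exp (5.5 * t) ^ d = Real.exp ((d:ℝ) * (5.5 * t)) := by
        rw [← Real.exp_nat_mul]
      have hmx : (d:ℝ) * (5.5 * t) ≤ m * x := by
        have h5 : 5.5 * (d:ℝ) / (r - ℓ) * x ≤ m * x :=
          mul_le_mul_of_nonneg_right hII hx0.le
        have heq : (d:ℝ) * (5.5 * t) = 5.5 * (d:ℝ) / (r - ℓ) * x := by
          rw [htdef]; field_simp
        linarith
      have hcexp : c ≤ Real.exp (m * x) := by
        calc c ≤ cheb d (-y) := hcle
          _ ≤ (2 * (-y))^d := hbound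
          _ ≤ (4 * t)^d := hp1
          _ ≤ Real.exp (5.5 * t) ^ d := hp2
          _ = Real.exp ((d:ℝ) * (5.5 * t)) := hp3
          _ ≤ Real.exp (m * x) := Real.exp_le_exp.mpr hmx
      calc Real.exp (-(m * x)) * c ≤ Real.exp (-(m * x)) * Real.exp (m * x) :=
            mul_le_mul_of_nonneg_left hcexp hexppos.le
        _ = 1 := by rw [← Real.exp_add]; simp
  simp only [Qfun, Qstar, Pd, if_neg hnotlt]
  have := mul_le_mul_of_nonneg_left hkey hδpos.le
  nlinarith [this]
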